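/- arXiv:math/0007064 — 2 statements merged into one kernel-verified Lean document; each statement's English description precedes it below -/
import Mathlib

section
/- For natural numbers n ≥ 1 and b ≥ 1, 12·n·b²·s(2n²b² + 2nb + 1, 2nb²) = 2n²b² − 3nb² + 1. -/
/-- The sawtooth function `((x))`: zero on integers, else `x - ⌊x⌋ - 1/2`. -/
def saw (x : ℚ) : ℚ := if x = ⌊x⌋ then 0 else x - ⌊x⌋ - 1/2

/-- The Dedekind sum `s(p,q) = ∑_{i=1}^{|q|} ((i/q)) ((p i/q))`. -/
noncomputable def dedekindSum (p q : ℤ) : ℚ :=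
  ∑ i ∈ Finset.Icc (1 : ℤ) |q|, saw ((i : ℚ) / (q : ℚ)) * saw ((p : ℚ) * (i : ℚ) / (q : ℚ))

/-!
Since `2n²b² + 2nb + 1 ≡ mb + 1 (mod mb²)` for `m = 2n`, it suffices to evaluate
`s(mb + 1, mb²)`. Write `i = jb + r` with `j < mb` and `r < b`. Then
`(mb + 1) i / (mb²) ≡ i / (mb²) + r / b (mod 1)`, and `i / (mb²) + r / b` is never an integer and
exceeds `1` exactly when `j + mr ≥ mb`. So, apart from the term `i = 0`, every term of the sum is
an explicit polynomial in `j` and `r` up to that one case split, and summing over `j` and then over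
`r` with the formulas for `∑ k` and `∑ k²` gives `12 m b² s(mb + 1, mb²) = m²b² - 3mb² + 2`.
-/

open Finset

@[simp]
lemma saw_intCast (k : ℤ) : saw k = 0 := by simp [saw]

@[simp]
lemma saw_zero : saw 0 = 0 := by simpa using saw_intCast 0

lemma saw_add_intCast (x : ℚ) (k : ℤ) : saw (x + k) = saw x := by
  simp only [saw, Int.floor_add_intCast, Int.cast_add, add_left_inj, add_sub_add_right_eq_sub]

lemma saw_eq_of_lt_of_lt {x : ℚ} {k : ℤ} (h₁ : k < x) (h₂ : x < k + 1) :
    saw x = x - k - 1 / 2 := by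
  have hfloor : ⌊x⌋ = k := Int.floor_eq_iff.2 ⟨h₁.le, h₂⟩
  simp [saw, hfloor, h₁.ne']

lemma saw_eq_sub_half {x : ℚ} (h₀ : 0 < x) (h₁ : x < 1) : saw x = x - 1 / 2 := by
  simpa using saw_eq_of_lt_of_lt (k := 0) (by simpa using h₀) (by simpa using h₁)

lemma dedekindSum_add_mul_self (p q k : ℤ) : dedekindSum (p + k * q) q = dedekindSum p q := by
  rcases eq_or_ne q 0 with rfl | hq
  · simp [dedekindSum]
  refine sum_congr rfl fun i _ => ?_
  have hshift : ((p + k * q : ℤ) : ℚ) * i / q = p * i / q + ((k * i : ℤ) : ℚ) := by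
    push_cast
    field_simp
  rw [hshift, saw_add_intCast]

lemma dedekindSum_natCast_right (p : ℤ) (q : ℕ) :
    dedekindSum p q = ∑ i ∈ range q, saw (i / q) * saw (p * i / q) := by
  set f : ℕ → ℚ := fun i => saw (i / q) * saw (p * i / q)
  have hIcc : dedekindSum p q = ∑ i ∈ range q, f (i + 1) := by
    simp [dedekindSum, Int.Icc_eq_finset_map, f, add_comm]
  have hq : f q = 0 := by
    rcases eq_or_ne q 0 with rfl | hq
    · simp [f]
    · simp [f, hq]
  rw [hIcc]
  linarith [sum_range_succ f q, sum_range_succ' f q, show f 0 = 0 by simp [f]]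

lemma sum_range_mul_eq_sum_sum {M : Type*} [AddCommMonoid M] (f : ℕ → M) (a b : ℕ) :
    ∑ i ∈ range (a * b), f i = ∑ j ∈ range a, ∑ r ∈ range b, f (j * b + r) := by
  induction a with
  | zero => simp
  | succ a ih => rw [Nat.succ_mul, sum_range_add, ih, sum_range_succ]

lemma sum_range_natCast {K : Type*} [Field K] [CharZero K] (n : ℕ) :
    ∑ i ∈ range n, (i : K) = n * (n - 1) / 2 := by
  induction n with
  | zero => simp
  | succ n ih =>
    rw [sum_range_succ, ih]
    push_cast
    ring

lemma sum_range_natCast_sq {K : Type*} [Field K] [CharZero K] (n : ℕ) :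
    ∑ i ∈ range n, (i : K) ^ 2 = n * (n - 1) * (2 * n - 1) / 6 := by
  induction n with
  | zero => simp
  | succ n ih =>
    rw [sum_range_succ, ih]
    push_cast
    ring

/-- The term `((i / q)) ((p i / q))` of `s(p, q)` for `p = mb + 1`, `q = mb²` and `i = jb + r`,
valid whenever `i ≠ 0`. -/
def sawProduct (m b j r : ℕ) : ℚ :=
  ((j * b + r) / (m * b ^ 2) - 1 / 2) *
    ((j * b + r) / (m * b ^ 2) + r / b - 1 / 2 - if m * b ≤ j + m * r then 1 else 0)

lemma saw_mul_saw_eq_sawProduct {m b j r : ℕ} (hj : j < m * b) (hr : r < b)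
    (hjr : 0 < j * b + r) :
    saw ((j * b + r) / (m * b ^ 2)) * saw ((m * b + 1) * (j * b + r) / (m * b ^ 2)) =
      sawProduct m b j r := by
  have hb : (0 : ℚ) < b := by exact_mod_cast hr.trans_le' (Nat.zero_le r)
  have hm : (0 : ℚ) < m := by
    exact_mod_cast Nat.pos_of_mul_pos_right (hj.trans_le' (Nat.zero_le j))
  have hq : (0 : ℚ) < m * b ^ 2 := by positivity
  have hj' : (j : ℚ) + 1 ≤ m * b := by exact_mod_cast hj
  have hr' : (r : ℚ) + 1 ≤ b := by exact_mod_cast hr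
  have hjr' : (0 : ℚ) < j * b + r := by exact_mod_cast hjr
  set x : ℚ := (j * b + r) / (m * b ^ 2) with hx
  have hx' : x + r / b = (j * b + r + m * b * r) / (m * b ^ 2) := by
    rw [hx]
    field_simp
  have hshift : (m * b + 1) * (j * b + r) / (m * b ^ 2) = x + r / b + ((j : ℤ) : ℚ) := by
    rw [hx]
    push_cast
    field_simp
    ring
  have hsaw : saw x = x - 1 / 2 :=
    saw_eq_sub_half (by positivity) (by rw [hx, div_lt_one hq]; nlinarith)
  rw [sawProduct, hsaw, hshift, saw_add_intCast]
  split_ifs with h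
  · have h' : (m : ℚ) * b ≤ j + m * r := by exact_mod_cast h
    -- `r = 0` would force `mb ≤ j`
    have hr₁ : (1 : ℚ) ≤ r := by
      have : 1 ≤ r := by
        by_contra! h0
        simp [Nat.lt_one_iff.1 h0] at h
        omega
      exact_mod_cast this
    rw [saw_eq_of_lt_of_lt (k := 1) (by rw [Int.cast_one, hx', lt_div_iff₀ hq]; nlinarith)
      (by rw [Int.cast_one, hx', div_lt_iff₀ hq]; nlinarith), Int.cast_one]
    ring
  · have h' : (j : ℚ) + m * r + 1 ≤ m * b := by exact_mod_cast (not_le.1 h)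
    rw [saw_eq_sub_half (by positivity) (by rw [hx', div_lt_one hq]; nlinarith)]
    ring

lemma sum_range_sawProduct {m b r : ℕ} (hm : 0 < m) (hb : 0 < b) (hr : r ≤ b) :
    ∑ j ∈ range (m * b), sawProduct m b j r =
      ((1 : ℚ) / (m * b ^ 3) + m / (2 * b)) * r ^ 2 - (1 / (m * b ^ 2) + m / 2) * r +
        1 / (6 * m * b) + m * b / 12 := by
  have hmr : m * r ≤ m * b := Nat.mul_le_mul_left m hr
  have htail : ∑ j ∈ range (m * b),
      (if m * b ≤ j + m * r then ((j * b + r) / (m * b ^ 2) - 1 / 2 : ℚ) else 0) =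
        ∑ k ∈ range (m * r), (((m * b - m * r + k : ℕ) * b + r) / (m * b ^ 2) - 1 / 2 : ℚ) := by
    have hfilter : (range (m * b)).filter (fun j => m * b ≤ j + m * r) =
        Ico (m * b - m * r) (m * b) := by
      ext j
      simp only [mem_filter, mem_range, mem_Ico]
      omega
    rw [← sum_filter, hfilter, sum_Ico_eq_sum_range, Nat.sub_sub_self hmr]
  simp only [sawProduct, mul_sub (_ - _ : ℚ), mul_ite, mul_one, mul_zero, sum_sub_distrib, htail]
  push_cast [Nat.cast_sub hmr]
  ring_nf
  simp only [sum_add_distrib, ← mul_sum, ← sum_mul, sum_const, card_range, nsmul_eq_mul,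
    sum_range_natCast, sum_range_natCast_sq]
  push_cast
  have hb' : (b : ℚ) ≠ 0 := by positivity
  have hm' : (m : ℚ) ≠ 0 := by positivity
  field_simp
  ring

theorem twelve_mul_dedekindSum_mul_add_one {m b : ℕ} (hm : 0 < m) (hb : 0 < b) :
    12 * m * b ^ 2 * dedekindSum (m * b + 1) (m * b ^ 2) =
      (m : ℚ) ^ 2 * b ^ 2 - 3 * m * b ^ 2 + 2 := by
  have hq : (m * b ^ 2 : ℤ) = ((m * b ^ 2 : ℕ) : ℤ) := by push_cast; ring
  rw [hq, dedekindSum_natCast_right, show range (m * b ^ 2) = range (m * b * b) by ring_nf,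
    sum_range_mul_eq_sum_sum]
  push_cast
  have hterm : ∀ j ∈ range (m * b), ∀ r ∈ range b,
      saw ((j * b + r) / (m * b ^ 2)) * saw ((m * b + 1) * (j * b + r) / (m * b ^ 2)) =
        sawProduct m b j r - if j = 0 ∧ r = 0 then 1 / 4 else 0 := by
    intro j hj r hr
    rw [mem_range] at hj hr
    by_cases h0 : j = 0 ∧ r = 0
    · obtain ⟨rfl, rfl⟩ := h0
      have : ¬ m * b ≤ 0 := Nat.not_le.2 (Nat.mul_pos hm hb)
      norm_num [sawProduct, this]
    · have hjr : 0 < j * b + r := by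
        rcases Nat.eq_zero_or_pos j with rfl | hj₀
        · omega
        · have := Nat.mul_pos hj₀ hb
          omega
      rw [saw_mul_saw_eq_sawProduct hj hr hjr, if_neg h0, sub_zero]
  have hcorner : ∑ j ∈ range (m * b), ∑ r ∈ range b,
      (if j = 0 ∧ r = 0 then 1 / 4 else 0 : ℚ) = 1 / 4 := by
    simp [ite_and, Nat.mul_pos hm hb, hb]
  rw [sum_congr rfl fun j hj => sum_congr rfl fun r hr => hterm j hj r hr]
  simp only [sum_sub_distrib]
  rw [hcorner, sum_comm, sum_congr rfl fun r hr => sum_range_sawProduct hm hb (mem_range.1 hr).le]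
  simp only [sum_add_distrib, sum_sub_distrib, ← mul_sum, sum_const, card_range, nsmul_eq_mul,
    sum_range_natCast, sum_range_natCast_sq]
  have hb' : (b : ℚ) ≠ 0 := by positivity
  have hm' : (m : ℚ) ≠ 0 := by positivity
  field_simp
  ring

theorem twelve_nb_sq_dedekind (n b : ℕ) (hn : 1 ≤ n) (hb : 1 ≤ b) :
    12 * (n : ℚ) * (b : ℚ) ^ 2 *
        dedekindSum (2 * (n : ℤ) ^ 2 * (b : ℤ) ^ 2 + 2 * (n : ℤ) * (b : ℤ) + 1)
          (2 * (n : ℤ) * (b : ℤ) ^ 2) =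
      2 * (n : ℚ) ^ 2 * (b : ℚ) ^ 2 - 3 * (n : ℚ) * (b : ℚ) ^ 2 + 1 := by
  have hp : 2 * (n : ℤ) ^ 2 * b ^ 2 + 2 * n * b + 1 =
      ((2 * n : ℕ) : ℤ) * b + 1 + n * (((2 * n : ℕ) : ℤ) * b ^ 2) := by
    push_cast
    ring
  have hq : 2 * (n : ℤ) * b ^ 2 = ((2 * n : ℕ) : ℤ) * b ^ 2 := by push_cast; ring
  have hm : 0 < 2 * n := by omega
  rw [hp, hq, dedekindSum_add_mul_self]
  have h := twelve_mul_dedekindSum_mul_add_one hm hb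
  push_cast at h ⊢
  linear_combination h / 2
end

section
/- For a positive integer q and integer p coprime to q, s(p, q) = (1/(4q)) · ∑_{i=1}^{q−1} cot(πi/q)·cot(πpi/q). -/
open Complex Finset

lemma saw_eq_ite_fract (x : ℚ) : saw x = if Int.fract x = 0 then 0 else Int.fract x - 1 / 2 := by
  simp only [saw, Int.fract, sub_eq_zero]

lemma saw_congr_fract {x y : ℚ} (h : Int.fract x = Int.fract y) : saw x = saw y := by
  rw [saw_eq_ite_fract, saw_eq_ite_fract, h]

lemma saw_neg (x : ℚ) : saw (-x) = -saw x := by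
  rw [saw_eq_ite_fract, saw_eq_ite_fract]
  by_cases h : Int.fract x = 0
  · simp [h, Int.fract_neg_eq_zero.mpr h]
  · rw [Int.fract_neg h, if_neg h, if_neg (by linarith [Int.fract_lt_one x])]
    ring

lemma saw_natCast_div {a n : ℕ} (h : a < n) :
    saw (a / n) = if a = 0 then 0 else (a / n : ℚ) - 1 / 2 := by
  rw [saw_eq_ite_fract, Int.fract_div_natCast_eq_div_natCast_mod, Nat.mod_eq_of_lt h]
  simp [(Nat.zero_le a).trans_lt h |>.ne']

lemma sub_one_mul_sum_range_mul_pow {R : Type*} [CommRing R] (z : R) (n : ℕ) :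
    (z - 1) * ∑ a ∈ range n, (a : R) * z ^ a = n * z ^ n - z * ∑ a ∈ range n, z ^ a := by
  induction n with
  | zero => simp
  | succ n ih =>
    rw [sum_range_succ, sum_range_succ, mul_add, ih]
    push_cast
    ring

lemma sum_range_saw_mul_pow {K : Type*} [Field K] [CharZero K] {n : ℕ} (hn : 0 < n) {z : K}
    (hz : z ^ n = 1) : ∑ a ∈ range n, (saw (a / n) : K) * z ^ a = (z + 1) / (2 * (z - 1)) := by
  have hn0 : (n : K) ≠ 0 := by exact_mod_cast hn.ne'
  have hterm : ∀ a ∈ range n, (saw (a / n) : K) * z ^ a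
      = (a : K) * z ^ a / n - z ^ a / 2 + if a = 0 then 1 / 2 else 0 := by
    intro a ha
    rw [saw_natCast_div (mem_range.mp ha)]
    split_ifs with h
    · simp [h]
    · push_cast
      ring
  rw [sum_congr rfl hterm, sum_add_distrib, sum_sub_distrib, sum_ite_eq' (range n) 0,
    if_pos (mem_range.mpr hn), ← sum_div, ← sum_div]
  rcases eq_or_ne z 1 with rfl | hz1
  -- at `z = 1` the right side is the junk value `2 / 0 = 0`, and so is the left by Gauss's sum
  · have hgauss : (∑ a ∈ range n, (a : K)) * 2 = n * (n - 1) := by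
      have := congrArg (Nat.cast (R := K)) (sum_range_id_mul_two n)
      push_cast [Nat.cast_pred hn] at this
      exact this
    simp only [one_pow, mul_one, sum_const, card_range, nsmul_eq_mul, sub_self, mul_zero, div_zero]
    field_simp
    linear_combination hgauss
  · have hgeom : ∑ a ∈ range n, z ^ a = 0 := by rw [geom_sum_eq hz1, hz, sub_self, zero_div]
    have hlin := sub_one_mul_sum_range_mul_pow z n
    rw [hz, hgeom, mul_zero, sub_zero, mul_one] at hlin
    have hz1' : z - 1 ≠ 0 := sub_ne_zero.mpr hz1
    have hS : ∑ a ∈ range n, (a : K) * z ^ a = n / (z - 1) := by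
      rw [eq_div_iff hz1', mul_comm, hlin]
    rw [hgeom, hS]
    field_simp
    ring

lemma Complex.cot_eq_I_mul_exp_ratio (θ : ℂ) :
    cot θ = I * (exp (2 * I * θ) + 1) / (exp (2 * I * θ) - 1) := by
  rw [cot_eq_exp_ratio, ← neg_sub (exp _) 1, mul_neg, div_neg, mul_comm I, ← div_div]
  field_simp
  rw [I_sq, neg_one_mul, neg_div]

namespace ZMod

def sawtooth {n : ℕ} (x : ZMod n) : ℚ := saw (x.val / n)

variable {n : ℕ} [NeZero n]

lemma sum_eq_sum_range {M : Type*} [AddCommMonoid M] (f : ZMod n → M) :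
    ∑ x, f x = ∑ a ∈ range n, f a :=
  sum_nbij' val (fun a => (a : ZMod n)) (fun x _ => mem_range.mpr (val_lt x))
    (fun _ _ => mem_univ _) (fun x _ => natCast_zmod_val x)
    (fun _ ha => val_cast_of_lt (mem_range.mp ha)) (fun x _ => by rw [natCast_zmod_val])

lemma sum_eq_sum_Icc_intCast {M : Type*} [AddCommMonoid M] (f : ZMod n → M) :
    ∑ x, f x = ∑ i ∈ Icc (1 : ℤ) n, f i := by
  refine sum_nbij' (fun x => ((x - 1).val : ℤ) + 1) (fun i => (i : ZMod n)) ?_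
    (fun _ _ => mem_univ _) ?_ ?_ (fun x _ => by push_cast; rw [natCast_zmod_val, sub_add_cancel])
  · intro x _
    have := val_lt (x - 1)
    rw [mem_Icc]
    omega
  · intro x _
    push_cast
    rw [natCast_zmod_val, sub_add_cancel]
  · intro i hi
    rw [mem_Icc] at hi
    have : ((i : ZMod n) - 1) = ((i - 1 : ℤ) : ZMod n) := by push_cast; rfl
    rw [this, val_intCast, Int.emod_eq_of_lt (by omega) (by omega), sub_add_cancel]

lemma sawtooth_intCast (i : ℤ) : sawtooth (i : ZMod n) = saw (i / n) := by
  refine saw_congr_fract ?_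
  rw [Int.fract_div_natCast_eq_div_natCast_mod, Int.fract_div_intCast_eq_div_intCast_mod,
    Nat.mod_eq_of_lt (val_lt _), ← val_intCast]
  push_cast
  rfl

lemma sawtooth_neg (x : ZMod n) : sawtooth (-x) = -sawtooth x := by
  obtain ⟨i, rfl⟩ := intCast_surjective x
  rw [← Int.cast_neg, sawtooth_intCast, sawtooth_intCast, Int.cast_neg, neg_div, saw_neg]

open Real in
lemma cot_eq_two_mul_I_mul_sum_sawtooth (j : ℤ) :
    Complex.cot (π * j / n)
      = 2 * I * ∑ x : ZMod n, (sawtooth x : ℂ) * stdAddChar (x * (j : ZMod n)) := by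
  have hn : 0 < n := Nat.pos_of_neZero n
  set z := exp (2 * π * I * j / n) with hz
  have hzn : z ^ n = 1 := by
    have hn' : (n : ℂ) ≠ 0 := by exact_mod_cast hn.ne'
    rw [hz, ← Complex.exp_nat_mul, show (n : ℂ) * (2 * π * I * j / n) = j * (2 * π * I) by
      field_simp]
    exact exp_int_mul_two_pi_mul_I j
  have hterm : ∀ a ∈ range n,
      (sawtooth (a : ZMod n) : ℂ) * stdAddChar ((a : ZMod n) * (j : ZMod n))
        = (saw (a / n) : ℂ) * z ^ a := by
    intro a _
    rw [← Int.cast_natCast, ← Int.cast_mul, sawtooth_intCast, stdAddChar_coe, hz,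
      ← Complex.exp_nat_mul]
    push_cast
    ring_nf
  rw [sum_eq_sum_range, sum_congr rfl hterm, sum_range_saw_mul_pow hn hzn, cot_eq_I_mul_exp_ratio,
    show 2 * I * (π * j / n) = 2 * π * I * j / n by ring, ← hz, mul_comm 2 (z - 1), ← div_div]
  ring

lemma sum_stdAddChar_mul_stdAddChar (a b : ZMod n) :
    ∑ k, stdAddChar (a * k) * stdAddChar (b * k) = if a + b = 0 then (n : ℂ) else 0 := by
  simp_rw [← AddChar.map_add_eq_mul, ← add_mul, mul_comm (a + b)]
  rw [AddChar.sum_mulShift _ (isPrimitive_stdAddChar n), card]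
  push_cast
  rfl

lemma sum_mul_sum_stdAddChar (f g : ZMod n → ℂ) (c : ZMod n) :
    ∑ k, (∑ a, f a * stdAddChar (a * k)) * (∑ b, g b * stdAddChar (b * (c * k)))
      = n * ∑ b, g b * f (-(c * b)) := by
  calc _ = ∑ b, ∑ a, f a * g b * ∑ k, stdAddChar (a * k) * stdAddChar (b * c * k) := by
        simp_rw [sum_mul_sum, mul_sum, ← mul_assoc _ c]
        conv_lhs => rw [sum_comm]; enter [2, a]; rw [sum_comm]
        rw [sum_comm]
        refine sum_congr rfl fun a _ => sum_congr rfl fun b _ => sum_congr rfl fun k _ => ?_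
        ring
    _ = ∑ b, ∑ a, if a = -(c * b) then n * (g b * f a) else 0 := by
        simp_rw [sum_stdAddChar_mul_stdAddChar, add_eq_zero_iff_eq_neg, mul_comm _ c]
        refine sum_congr rfl fun b _ => sum_congr rfl fun a _ => ?_
        split_ifs <;> ring
    _ = n * ∑ b, g b * f (-(c * b)) := by
        simp_rw [sum_ite_eq', mem_univ, if_true, mul_sum]

open Real in
lemma sum_Icc_cot_mul_cot (p : ℤ) :
    ∑ i ∈ Icc (1 : ℤ) n, Complex.cot (π * i / n) * Complex.cot (π * p * i / n)
      = 4 * n * ∑ x : ZMod n, (sawtooth x : ℂ) * sawtooth ((p : ZMod n) * x) := by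
  set F : ZMod n → ℂ := fun k => ∑ x, (sawtooth x : ℂ) * stdAddChar (x * k) with hF
  have hcot (i : ℤ) : Complex.cot (π * i / n) * Complex.cot (π * p * i / n)
      = -4 * (F i * F ((p : ZMod n) * i)) := by
    rw [mul_assoc (π : ℂ), ← Int.cast_mul, cot_eq_two_mul_I_mul_sum_sawtooth,
      cot_eq_two_mul_I_mul_sum_sawtooth, Int.cast_mul]
    linear_combination 4 * (F i * F ((p : ZMod n) * i)) * I_sq
  simp_rw [hcot]
  rw [← mul_sum, ← sum_eq_sum_Icc_intCast (fun k => F k * F ((p : ZMod n) * k)), hF,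
    sum_mul_sum_stdAddChar]
  simp_rw [sawtooth_neg]
  push_cast
  simp only [mul_neg, sum_neg_distrib]
  ring

end ZMod

lemma dedekindSum_natCast_eq_sum_sawtooth (p : ℤ) (n : ℕ) [NeZero n] :
    dedekindSum p n = ∑ x : ZMod n, ZMod.sawtooth x * ZMod.sawtooth ((p : ZMod n) * x) := by
  rw [dedekindSum, Nat.abs_cast, ZMod.sum_eq_sum_Icc_intCast]
  refine sum_congr rfl fun i _ => ?_
  rw [← Int.cast_mul (α := ZMod n), ZMod.sawtooth_intCast, ZMod.sawtooth_intCast]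
  push_cast
  rfl

open Real in
theorem dedekind_sum_eq_cot_sum_general (p q : ℤ) (hq : 0 < q) :
    ((dedekindSum p q : ℚ) : ℝ) =
      1 / (4 * (q : ℝ)) * ∑ i ∈ Finset.Icc (1 : ℤ) (q - 1),
        Real.cot (π * (i : ℝ) / (q : ℝ)) * Real.cot (π * (p : ℝ) * (i : ℝ) / (q : ℝ)) := by
  lift q to ℕ using hq.le with n
  have : NeZero n := ⟨by omega⟩
  have hn : (n : ℝ) ≠ 0 := Nat.cast_ne_zero.mpr (NeZero.ne n)
  -- the extra term `i = n` vanishes because Mathlib's `cot π` is `cos π / 0 = 0`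
  have hlast : ∑ i ∈ Icc (1 : ℤ) (n - 1), Real.cot (π * i / n) * Real.cot (π * p * i / n)
      = ∑ i ∈ Icc (1 : ℤ) n, Real.cot (π * i / n) * Real.cot (π * p * i / n) := by
    rw [← insert_Icc_sub_one_right_eq_Icc (by omega : (1 : ℤ) ≤ n), sum_insert (by simp),
      Int.cast_natCast, mul_div_cancel_right₀ π hn, Real.cot_eq_cos_div_sin, Real.sin_pi,
      div_zero, zero_mul, zero_add]
  apply Complex.ofReal_injective
  simp only [Int.cast_natCast, hlast, dedekindSum_natCast_eq_sum_sawtooth]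
  push_cast
  rw [ZMod.sum_Icc_cot_mul_cot]
  field_simp [NeZero.ne n]

open Real in
theorem dedekind_sum_eq_cot_sum (p q : ℤ) (hq : 0 < q) (h : Int.gcd p q = 1) :
    ((dedekindSum p q : ℚ) : ℝ) =
      1 / (4 * (q : ℝ)) * ∑ i ∈ Finset.Icc (1 : ℤ) (q - 1),
        Real.cot (π * (i : ℝ) / (q : ℝ)) * Real.cot (π * (p : ℝ) * (i : ℝ) / (q : ℝ)) :=
  dedekind_sum_eq_cot_sum_general p q hq
end
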